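/- arXiv:1603.09026 — 4 statements merged into one kernel-verified Lean document; each statement's English description precedes it below -/
import Mathlib

section
/- Let A be a finite set and let (V_n)_{n=1}^∞ be a sequence of finite sets such that |V_n| increases to infinity. For each n let μ_n be a probability measure on A^{V_n}. Then liminf_{n→∞} H(μ_n)/|V_n| ≤ sup_{ε>0} liminf_{n→∞} (1/|V_n|)·log cov_ε(μ_n). -/
open MeasureTheory Filter

/-- Shannon entropy of a measure on a finite set, with the convention `0 * log 0 = 0`. -/
noncomputable def shannonEntropy {D : Type*} [Fintype D] [MeasurableSpace D]
    (η : Measure D) : ℝ :=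
  -∑ d : D, (η {d}).toReal * Real.log (η {d}).toReal

/-- `covNum η ε` is the minimal cardinality of a set `F` with `η F > 1 - ε`. -/
noncomputable def covNum {D : Type*} [MeasurableSpace D] (η : Measure D) (ε : ℝ) : ℕ :=
  sInf {k : ℕ | ∃ F : Finset D, 1 - ε < (η ↑F).toReal ∧ F.card = k}

/-! Splitting the entropy along a finite set `F` and its complement and applying Jensen's
inequality to `negMulLog` on each part gives `H(η) ≤ log |F| + η(Fᶜ) log |D| + log 2`, the
last term bounding the binary entropy of the split. For `F` a minimal set of mass `> 1 - ε`
in `D = A ^ V n` this reads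
`H(μ n) / |V n| ≤ log cov_ε(μ n) / |V n| + ε log |A| + log 2 / |V n|`,
and the error terms vanish as `n → ∞` and then `ε → 0`. -/

open Real

theorem sum_negMulLog_le {ι : Type*} (s : Finset ι) {p : ι → ℝ} (hp : ∀ i ∈ s, 0 ≤ p i) :
    ∑ i ∈ s, negMulLog (p i) ≤
      (∑ i ∈ s, p i) * log s.card + negMulLog (∑ i ∈ s, p i) := by
  rcases s.eq_empty_or_nonempty with rfl | hs
  · simp
  have hk : (0 : ℝ) < s.card := by exact_mod_cast hs.card_pos
  have jensen := concaveOn_negMulLog.le_map_sum (t := s) (w := fun _ => (s.card : ℝ)⁻¹)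
    (fun _ _ => by positivity) (by simp [hk.ne']) hp
  simp only [smul_eq_mul, ← Finset.mul_sum, negMulLog_mul] at jensen
  have hinv : negMulLog (s.card : ℝ)⁻¹ = (s.card : ℝ)⁻¹ * log s.card := by
    simp [negMulLog, log_inv]
  rw [hinv] at jensen
  have := mul_le_mul_of_nonneg_left jensen hk.le
  field_simp at this
  linarith

theorem log_natCast_monotone : Monotone fun n : ℕ => log n := by
  intro m n h
  rcases m.eq_zero_or_pos with rfl | hm
  · simpa using log_natCast_nonneg n
  · exact log_le_log (by exact_mod_cast hm) (by exact_mod_cast h)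

section

variable {D : Type*} [Fintype D] [MeasurableSpace D] (η : Measure D)

theorem shannonEntropy_eq_sum_negMulLog : shannonEntropy η = ∑ d, negMulLog (η.real {d}) := by
  simp [shannonEntropy, negMulLog, measureReal_def, Finset.sum_neg_distrib]

theorem shannonEntropy_nonneg [IsProbabilityMeasure η] : 0 ≤ shannonEntropy η := by
  rw [shannonEntropy_eq_sum_negMulLog]
  exact Finset.sum_nonneg fun _ _ => negMulLog_nonneg measureReal_nonneg measureReal_le_one

theorem shannonEntropy_le_log_card_add [MeasurableSingletonClass D] [IsProbabilityMeasure η]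
    (F : Finset D) :
    shannonEntropy η ≤ log F.card + η.real (↑F)ᶜ * log (Fintype.card D) + log 2 := by
  classical
  have hF := sum_negMulLog_le F (p := fun d => η.real {d}) fun _ _ => measureReal_nonneg
  have hFc := sum_negMulLog_le Fᶜ (p := fun d => η.real {d}) fun _ _ => measureReal_nonneg
  simp only [sum_measureReal_singleton, Finset.coe_compl] at hF hFc
  rw [probReal_compl_eq_one_sub F.measurableSet] at hFc ⊢
  have hbin : negMulLog (η.real F) + negMulLog (1 - η.real F) ≤ log 2 :=
    binEntropy_eq_negMulLog_add_negMulLog_one_sub (η.real F) ▸ binEntropy_le_log_two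
  have hlogF : η.real F * log F.card ≤ log F.card :=
    mul_le_of_le_one_left (log_natCast_nonneg _) measureReal_le_one
  have hlogFc : (1 - η.real F) * log Fᶜ.card ≤ (1 - η.real F) * log (Fintype.card D) :=
    mul_le_mul_of_nonneg_left (log_natCast_monotone (Finset.card_le_univ _))
      (sub_nonneg.2 measureReal_le_one)
  rw [shannonEntropy_eq_sum_negMulLog, ← Finset.sum_add_sum_compl F]
  linarith

theorem exists_finset_card_eq_covNum [IsProbabilityMeasure η] {ε : ℝ} (hε : 0 < ε) :
    ∃ F : Finset D, 1 - ε < η.real F ∧ F.card = covNum η ε := by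
  have hne : {k : ℕ | ∃ F : Finset D, 1 - ε < η.real F ∧ F.card = k}.Nonempty := by
    refine ⟨_, Finset.univ, ?_, rfl⟩
    rw [Finset.coe_univ, probReal_univ]
    linarith
  exact Nat.sInf_mem hne

theorem covNum_le_card [IsProbabilityMeasure η] {ε : ℝ} (hε : 0 < ε) :
    covNum η ε ≤ Fintype.card D := by
  refine Nat.sInf_le ⟨Finset.univ, ?_, Finset.card_univ⟩
  rw [← measureReal_def, Finset.coe_univ, probReal_univ]
  linarith

theorem shannonEntropy_le_log_covNum_add [MeasurableSingletonClass D] [IsProbabilityMeasure η]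
    {ε : ℝ} (hε : 0 < ε) :
    shannonEntropy η ≤ log (covNum η ε) + ε * log (Fintype.card D) + log 2 := by
  obtain ⟨F, hF, hcard⟩ := exists_finset_card_eq_covNum η hε
  have hFc : η.real (↑F)ᶜ ≤ ε := by
    rw [probReal_compl_eq_one_sub F.measurableSet]
    linarith
  calc shannonEntropy η ≤ log F.card + η.real (↑F)ᶜ * log (Fintype.card D) + log 2 :=
        shannonEntropy_le_log_card_add η F
    _ ≤ log (covNum η ε) + ε * log (Fintype.card D) + log 2 := by
        rw [hcard]
        gcongr

end

theorem log_card_fun (V A : Type*) [Fintype V] [DecidableEq V] [Fintype A] :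
    log (Fintype.card (V → A)) = Fintype.card V * log (Fintype.card A) := by
  rw [Fintype.card_fun, Nat.cast_pow, log_pow]

section

variable {V A : Type*} [Fintype V] [DecidableEq V] [Fintype A] [MeasurableSpace A]
  (η : Measure (V → A)) [IsProbabilityMeasure η]

theorem log_covNum_div_card_le {ε : ℝ} (hε : 0 < ε) :
    log (covNum η ε) / Fintype.card V ≤ log (Fintype.card A) := by
  refine div_le_of_le_mul₀ (Nat.cast_nonneg _) (log_natCast_nonneg _) ?_
  rw [mul_comm, ← log_card_fun V A]
  exact log_natCast_monotone (covNum_le_card η hε)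

theorem shannonEntropy_div_card_le [MeasurableSingletonClass A] {ε : ℝ} (hε : 0 < ε)
    (hV : 0 < Fintype.card V) :
    shannonEntropy η / Fintype.card V ≤
      log (covNum η ε) / Fintype.card V + ε * log (Fintype.card A) + log 2 / Fintype.card V := by
  have hV' : (0 : ℝ) < Fintype.card V := by exact_mod_cast hV
  have h := shannonEntropy_le_log_covNum_add η hε
  rw [log_card_fun V A] at h
  rw [div_le_iff₀ hV']
  refine h.trans_eq ?_
  field_simp

end

theorem liminf_le_iSup_liminf_of_forall_le_add {α ι : Type*} {l : Filter α} [l.NeBot]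
    {p : ι → Prop} {f : α → ℝ} {g : ι → α → ℝ} {C : ℝ}
    (hf : IsBoundedUnder (· ≥ ·) l f) (hg : ∀ i, p i → IsBoundedUnder (· ≥ ·) l (g i))
    (hgC : ∀ i, p i → ∀ᶠ x in l, g i x ≤ C)
    (h : ∀ c > 0, ∃ i, p i ∧ ∀ᶠ x in l, f x ≤ g i x + c) :
    liminf f l ≤ ⨆ (i) (_ : p i), liminf (g i) l := by
  have hliminf_le : ∀ i, p i → liminf (g i) l ≤ C := fun i hi =>
    liminf_le_of_frequently_le (hgC i hi).frequently (hg i hi)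
  have hbdd : BddAbove (Set.range fun i => ⨆ _ : p i, liminf (g i) l) := by
    refine ⟨max C 0, Set.forall_mem_range.2 fun i => ?_⟩
    -- for `¬ p i` the inner supremum is `sSup ∅ = 0`
    by_cases hi : p i
    · rw [ciSup_pos hi]
      exact (hliminf_le i hi).trans (le_max_left _ _)
    · simp [hi]
  refine le_of_forall_pos_le_add fun c hc => ?_
  obtain ⟨i, hi, hfg⟩ := h c hc
  have hcobdd : IsCoboundedUnder (· ≥ ·) l (g i) :=
    (isBoundedUnder_of_eventually_le (hgC i hi)).isCoboundedUnder_ge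
  have hcobdd_add : IsCoboundedUnder (· ≥ ·) l fun x => g i x + c :=
    (isBoundedUnder_of_eventually_le
      ((hgC i hi).mono fun _ hx => add_le_add_left hx c)).isCoboundedUnder_ge
  calc liminf f l ≤ liminf (fun x => g i x + c) l := liminf_le_liminf hfg hf hcobdd_add
    _ = liminf (g i) l + c := liminf_add_const l (g i) c hcobdd (hg i hi)
    _ ≤ (⨆ (i) (_ : p i), liminf (g i) l) + c := by
        gcongr
        exact le_ciSup_of_le hbdd i (ciSup_pos (f := fun _ => liminf (g i) l) hi).ge

theorem stmt0_general (A : Type*) [Fintype A] [MeasurableSpace A] [DiscreteMeasurableSpace A]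
    (V : ℕ → Type*) [∀ n, Fintype (V n)] [∀ n, DecidableEq (V n)]
    (htop : Tendsto (fun n => Fintype.card (V n)) atTop atTop)
    (μ : (n : ℕ) → Measure (V n → A)) (hprob : ∀ n, IsProbabilityMeasure (μ n)) :
    liminf (fun n => shannonEntropy (μ n) / (Fintype.card (V n) : ℝ)) atTop ≤
      ⨆ (ε : ℝ) (_ : 0 < ε),
        liminf (fun n => Real.log (covNum (μ n) ε) / (Fintype.card (V n) : ℝ)) atTop := by
  set L := log (Fintype.card A)
  refine liminf_le_iSup_liminf_of_forall_le_add (C := L)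
    (isBoundedUnder_of ⟨0, fun n => div_nonneg (shannonEntropy_nonneg _) (Nat.cast_nonneg _)⟩)
    (fun _ _ => isBoundedUnder_of
      ⟨0, fun _ => div_nonneg (log_natCast_nonneg _) (Nat.cast_nonneg _)⟩)
    (fun _ hε => .of_forall fun n => log_covNum_div_card_le (μ n) hε) fun c hc => ?_
  have hL : 0 ≤ L := log_natCast_nonneg _
  have hεL : c / (2 * (L + 1)) * L ≤ c / 2 := by
    rw [div_mul_eq_mul_div, div_le_div_iff₀ (by positivity) two_pos]
    nlinarith
  have hlog2 : Tendsto (fun n => log 2 / (Fintype.card (V n) : ℝ)) atTop (nhds 0) :=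
    tendsto_const_nhds.div_atTop (tendsto_natCast_atTop_atTop.comp htop)
  refine ⟨c / (2 * (L + 1)), by positivity, ?_⟩
  filter_upwards [htop.eventually_ge_atTop 1, hlog2.eventually (gt_mem_nhds (half_pos hc))]
    with n hV hlog2n
  linarith [shannonEntropy_div_card_le (μ n) (ε := c / (2 * (L + 1))) (by positivity) hV]

theorem stmt0 (A : Type*) [Fintype A] [MeasurableSpace A] [DiscreteMeasurableSpace A]
    (V : ℕ → Type*) [∀ n, Fintype (V n)] [∀ n, DecidableEq (V n)]
    (hmono : Monotone fun n => Fintype.card (V n))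
    (htop : Tendsto (fun n => Fintype.card (V n)) atTop atTop)
    (μ : (n : ℕ) → Measure (V n → A)) (hprob : ∀ n, IsProbabilityMeasure (μ n)) :
    liminf (fun n => shannonEntropy (μ n) / (Fintype.card (V n) : ℝ)) atTop ≤
      ⨆ (ε : ℝ) (_ : 0 < ε),
        liminf (fun n => Real.log (covNum (μ n) ε) / (Fintype.card (V n) : ℝ)) atTop :=
  stmt0_general A V htop μ hprob
end

section
/- Let G be a countable discrete group, Σ = (σ_n : G → Sym(V_n)) a sofic approximation to G, A and B finite sets, μ a G-process on A^G, and (μ_n) a sequence of probability measures on A^{V_n} that locally weak* converges to μ over Σ. Let F ⊆ G be finite, let θ : A^F → B, and let φ = θ ∘ π_F : A^G → B be the corresponding F-local observable. Let c > 0 and let S_n ⊆ V_n be sets with |S_n| ≥ c·|V_n| for all n. Then for every ε > 0, for all sufficiently large n: H(μ_F) − (1/|S_n|)·H(π_{σ_n^F(S_n)*} μ_n) ≥ H_μ(φ) − (1/|S_n|)·H(π_{S_n*}(φ^{σ_n})_* μ_n) − ε, where σ_n^F(S) = {σ_n(g)(s) : g ∈ F, s ∈ S} and π_W : A^{V_n}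 → A^W (resp. π_W : B^{V_n} → B^W) denotes coordinate projection. -/
open MeasureTheory Filter

/-- Shannon entropy `H_μ(α)` of a finite-valued observable: the entropy of the
pushforward measure `α_* μ`. -/
noncomputable def obsEntropy {X D : Type*} [MeasurableSpace X] [Fintype D] [MeasurableSpace D]
    (μ : Measure X) (α : X → D) : ℝ :=
  shannonEntropy (Measure.map α μ)

/-- Conditional Shannon entropy `H_μ(α | β) = H_μ((α,β)) - H_μ(β)`. -/
noncomputable def condEntropyObs {X D E : Type*} [MeasurableSpace X]
    [Fintype D] [MeasurableSpace D] [Fintype E] [MeasurableSpace E]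
    (μ : Measure X) (α : X → D) (β : X → E) : ℝ :=
  obsEntropy μ (fun x => (α x, β x)) - obsEntropy μ β

/-- The Rokhlin distance `d^Rok_μ(α, β) = H_μ(α|β) + H_μ(β|α)`. -/
noncomputable def rokDist {X D E : Type*} [MeasurableSpace X]
    [Fintype D] [MeasurableSpace D] [Fintype E] [MeasurableSpace E]
    (μ : Measure X) (α : X → D) (β : X → E) : ℝ :=
  condEntropyObs μ α β + condEntropyObs μ β α

/-- `σ = (σ_n : G → Sym(V_n))` is a sofic approximation to `G`. -/
def IsSoficApprox {G : Type*} [Group G] {V : ℕ → Type*} [∀ n, Fintype (V n)]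
    (σ : ∀ n, G → Equiv.Perm (V n)) : Prop :=
  Tendsto (fun n => Fintype.card (V n)) atTop atTop ∧
    (∀ g h : G,
      Tendsto (fun n =>
          (Nat.card {v : V n // σ n g (σ n h v) = σ n (g * h) v} : ℝ) /
            (Fintype.card (V n) : ℝ)) atTop (nhds 1)) ∧
    (∀ g : G, g ≠ 1 →
      Tendsto (fun n =>
          (Nat.card {v : V n // σ n g v = v} : ℝ) / (Fintype.card (V n) : ℝ))
        atTop (nhds 0))

/-- Total variation distance between two measures on a finite set. -/
noncomputable def tvDist {D : Type*} [Fintype D] [MeasurableSpace D]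
    (η₁ η₂ : Measure D) : ℝ :=
  (∑ d : D, |(η₁ {d}).toReal - (η₂ {d}).toReal|) / 2

/-- The sequence of measures `μn n` on `V n → A` locally weak* converges over the sofic
approximation `σ` to the measure `μ` on `A^G`: for every finite `F ⊆ G` and `δ > 0`,
eventually at least `(1-δ)|V_n|` of the `v ∈ V_n` satisfy
`‖(Π^{σ_n}_{v,F})_* μ_n − μ_F‖_TV < δ`. -/
def LocalWeakStarConverges {G : Type*} [Group G] [DecidableEq G] {V : ℕ → Type*}
    [∀ n, Fintype (V n)] {A : Type*} [Fintype A] [MeasurableSpace A]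
    (σ : ∀ n, G → Equiv.Perm (V n)) (μn : ∀ n, Measure (V n → A))
    (μ : Measure (G → A)) : Prop :=
  ∀ (F : Finset G) (δ : ℝ), 0 < δ → ∀ᶠ n in atTop,
    ((1 - δ) * (Fintype.card (V n) : ℝ)) ≤
      (Nat.card {v : V n //
        tvDist (Measure.map (fun (x : V n → A) (g : ↥F) => x (σ n g.1 v)) (μn n))
          (Measure.map (fun (a : G → A) (g : ↥F) => a g.1) μ) < δ} : ℝ)

/-!
The coordinates of `x` on `σ_n^F(S_n)` are determined by the windows
`W_v x = (x (σ_n g v))_{g ∈ F}`, `v ∈ S_n`, and `φ^{σ_n}` is `θ ∘ W_v` at `v`. Conditioning on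
`Ψ = (θ ∘ W_v)_{v ∈ S_n}` and using subadditivity and monotonicity of conditional entropy gives
`H(x|_{σ_n^F(S_n)}) - H(Ψ) ≤ ∑_{v ∈ S_n} H(W_v | θ ∘ W_v) = ∑_{v ∈ S_n} (H(ν_v) - H(θ_* ν_v))`,
where `ν_v` is the law of `W_v`. For all but `δ |V_n| ≤ (δ / c) |S_n|` vertices, `ν_v` is
`δ`-close to `μ_F` in total variation, so by continuity the summand is at most
`H(μ_F) - H_μ(φ) + ε / 2`; every other summand is at most `log |A^F|`.
-/

open Real

namespace FiniteEntropy

/-! A finite probability space is encoded by a weight function `p : Ω → ℝ`; the lemmas that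
need `0 ≤ p` and `∑ ω, p ω = 1` assume them explicitly. -/

variable {Ω D E C : Type*} [Fintype Ω] [DecidableEq D] [DecidableEq E] [DecidableEq C]

noncomputable def law (p : Ω → ℝ) (α : Ω → D) (d : D) : ℝ :=
  ∑ ω, if α ω = d then p ω else 0

noncomputable def entropy [Fintype D] (p : Ω → ℝ) (α : Ω → D) : ℝ :=
  ∑ d, negMulLog (law p α d)

lemma sum_law_mul [Fintype D] (p : Ω → ℝ) (α : Ω → D) (f : D → ℝ) :
    ∑ d, law p α d * f d = ∑ ω, p ω * f (α ω) := by
  simp only [law, Finset.sum_mul, ite_mul, zero_mul]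
  rw [Finset.sum_comm]
  simp

lemma sum_law [Fintype D] (p : Ω → ℝ) (α : Ω → D) : ∑ d, law p α d = ∑ ω, p ω := by
  simpa using sum_law_mul p α 1

lemma law_law [Fintype D] (p : Ω → ℝ) (α : Ω → D) (h : D → E) :
    law (law p α) h = law p (h ∘ α) := by
  ext e
  simpa [law, ← Finset.sum_filter] using sum_law_mul p α (fun d => if h d = e then 1 else 0)

lemma sum_law_pair_left [Fintype D] (p : Ω → ℝ) (α : Ω → D) (γ : Ω → C) (c : C) :
    ∑ d, law p (fun ω => (α ω, γ ω)) (d, c) = law p γ c := by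
  simp only [law, Prod.mk.injEq, ite_and]
  rw [Finset.sum_comm]
  simp

lemma entropy_law [Fintype D] [Fintype E] (p : Ω → ℝ) (α : Ω → D) (h : D → E) :
    entropy (law p α) h = entropy p (h ∘ α) := by
  rw [entropy, entropy, law_law]

lemma entropy_eq_neg_sum_log [Fintype D] (p : Ω → ℝ) (α : Ω → D) :
    entropy p α = -∑ ω, p ω * log (law p α (α ω)) := by
  rw [← sum_law_mul p α (fun d => log (law p α d))]
  simp [entropy, negMulLog, Finset.sum_neg_distrib]

variable {p : Ω → ℝ}

lemma law_nonneg (hp : ∀ ω, 0 ≤ p ω) (α : Ω → D) (d : D) : 0 ≤ law p α d :=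
  Finset.sum_nonneg fun ω _ => by split_ifs <;> simp [hp ω]

lemma le_law_comp (hp : ∀ ω, 0 ≤ p ω) (α : Ω → D) (h : D → E) (d : D) :
    law p α d ≤ law p (h ∘ α) (h d) :=
  Finset.sum_le_sum fun ω _ => by
    by_cases hω : α ω = d
    · simp [hω]
    · split_ifs <;> simp [hp ω]

lemma le_law_self (hp : ∀ ω, 0 ≤ p ω) (α : Ω → D) (ω : Ω) : p ω ≤ law p α (α ω) := by
  classical
  have := Finset.single_le_sum (f := fun ω' => if α ω' = α ω then p ω' else 0)
    (fun ω' _ => by split_ifs <;> simp [hp ω']) (Finset.mem_univ ω)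
  simpa [law] using this

lemma law_pos (hp : ∀ ω, 0 ≤ p ω) {ω : Ω} (hω : 0 < p ω) (α : Ω → D) : 0 < law p α (α ω) :=
  hω.trans_le (le_law_self hp α ω)

lemma entropy_comp_le [Fintype D] [Fintype E] (hp : ∀ ω, 0 ≤ p ω) (α : Ω → D) (h : D → E) :
    entropy p (h ∘ α) ≤ entropy p α := by
  rw [entropy_eq_neg_sum_log, entropy_eq_neg_sum_log, neg_le_neg_iff]
  refine Finset.sum_le_sum fun ω _ => ?_
  rcases (hp ω).eq_or_lt with h0 | hω
  · simp [← h0]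
  exact mul_le_mul_of_nonneg_left
    (log_le_log (law_pos hp hω α) (le_law_comp hp α h (α ω))) hω.le

lemma entropy_le_of_eq_comp [Fintype D] [Fintype E] (hp : ∀ ω, 0 ≤ p ω) {α : Ω → D}
    {β : Ω → E} (h : D → E) (hβ : ∀ ω, β ω = h (α ω)) : entropy p β ≤ entropy p α := by
  obtain rfl : β = h ∘ α := funext hβ
  exact entropy_comp_le hp α h

/-- Gibbs' inequality. -/
lemma entropy_le_neg_sum_log [Fintype D] (hp : ∀ ω, 0 ≤ p ω) (hp1 : ∑ ω, p ω = 1)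
    (α : Ω → D) {Q : D → ℝ} (hQ : ∀ d, 0 ≤ Q d) (hQ1 : ∑ d, Q d ≤ 1)
    (hQpos : ∀ ω, 0 < p ω → 0 < Q (α ω)) :
    entropy p α ≤ -∑ ω, p ω * log (Q (α ω)) := by
  have hlog : ∀ ω, p ω * (log (Q (α ω)) - log (law p α (α ω)))
      ≤ p ω * (Q (α ω) / law p α (α ω) - 1) := by
    intro ω
    rcases (hp ω).eq_or_lt with h0 | hω
    · simp [← h0]
    refine mul_le_mul_of_nonneg_left ?_ hω.le
    rw [← log_div (hQpos ω hω).ne' (law_pos hp hω α).ne']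
    exact log_le_sub_one_of_pos (div_pos (hQpos ω hω) (law_pos hp hω α))
  have hratio : ∑ ω, p ω * (Q (α ω) / law p α (α ω)) ≤ 1 := by
    rw [← sum_law_mul p α (fun d => Q d / law p α d)]
    refine (Finset.sum_le_sum fun d _ => ?_).trans hQ1
    rcases eq_or_ne (law p α d) 0 with h0 | h0
    · simp [h0, hQ d]
    · rw [mul_div_cancel₀ _ h0]
  have := Finset.sum_le_sum fun ω (_ : ω ∈ Finset.univ) => hlog ω
  simp only [mul_sub, mul_one, Finset.sum_sub_distrib, hp1] at this
  rw [entropy_eq_neg_sum_log]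
  linarith

lemma entropy_nonneg [Fintype D] (hp : ∀ ω, 0 ≤ p ω) (hp1 : ∑ ω, p ω = 1) (α : Ω → D) :
    0 ≤ entropy p α :=
  Finset.sum_nonneg fun d _ => negMulLog_nonneg (law_nonneg hp α d) <| by
    rw [← hp1, ← sum_law p α]
    exact Finset.single_le_sum (fun d _ => law_nonneg hp α d) (Finset.mem_univ d)

lemma entropy_le_log_card [Fintype D] (hp : ∀ ω, 0 ≤ p ω) (hp1 : ∑ ω, p ω = 1) (α : Ω → D) :
    entropy p α ≤ log (Fintype.card D) := by
  obtain ⟨ω⟩ : Nonempty Ω := by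
    by_contra h
    rw [not_nonempty_iff] at h
    simp at hp1
  have hD : 0 < (Fintype.card D : ℝ) := Nat.cast_pos.mpr (Fintype.card_pos_iff.mpr ⟨α ω⟩)
  refine (entropy_le_neg_sum_log hp hp1 α (Q := fun _ => (Fintype.card D : ℝ)⁻¹)
    (fun _ => by positivity) (by simp [hD.ne']) fun _ _ => by positivity).trans_eq ?_
  simp [← Finset.sum_mul, hp1]

/-- `H(α | β) ≤ H(α | g ∘ β)`. -/
lemma entropy_pair_add_entropy_comp_le [Fintype D] [Fintype E] [Fintype C]
    (hp : ∀ ω, 0 ≤ p ω) (hp1 : ∑ ω, p ω = 1) (α : Ω → D) (β : Ω → E) (g : E → C) :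
    entropy p (fun ω => (α ω, β ω)) + entropy p (g ∘ β)
      ≤ entropy p (fun ω => (α ω, g (β ω))) + entropy p β := by
  set Pα : D × C → ℝ := law p (fun ω => (α ω, g (β ω)))
  set Pβ : E → ℝ := law p β
  set Pγ : C → ℝ := law p (g ∘ β)
  -- Gibbs' inequality against `Q (a, b) = P(α = a, g ∘ β = g b) P(β = b) / P(g ∘ β = g b)`.
  have hQ1 : ∑ x : D × E, Pα (x.1, g x.2) * Pβ x.2 / Pγ (g x.2) ≤ 1 := by
    rw [Fintype.sum_prod_type_right]
    refine (Finset.sum_le_sum fun e _ => ?_).trans_eq ((sum_law p β).trans hp1)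
    dsimp only [Pα, Pγ]
    rw [← Finset.sum_div, ← Finset.sum_mul, sum_law_pair_left, mul_comm, mul_div_assoc]
    exact mul_le_of_le_one_right (law_nonneg hp β e) (div_self_le_one _)
  have hgibbs := entropy_le_neg_sum_log hp hp1 (fun ω => (α ω, β ω))
    (Q := fun x => Pα (x.1, g x.2) * Pβ x.2 / Pγ (g x.2))
    (fun x => div_nonneg (mul_nonneg (law_nonneg hp _ _) (law_nonneg hp _ _)) (law_nonneg hp _ _))
    hQ1 fun ω hω => div_pos (mul_pos (law_pos hp hω _) (law_pos hp hω _)) (law_pos hp hω (g ∘ β))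
  have hsplit : ∀ ω, p ω * log (Pα (α ω, g (β ω)) * Pβ (β ω) / Pγ (g (β ω)))
      = p ω * log (Pα (α ω, g (β ω))) + p ω * log (Pβ (β ω)) - p ω * log (Pγ (g (β ω))) := by
    intro ω
    rcases (hp ω).eq_or_lt with h0 | hω
    · simp [← h0]
    have hα : 0 < Pα (α ω, g (β ω)) := law_pos hp hω fun ω => (α ω, g (β ω))
    have hβ : 0 < Pβ (β ω) := law_pos hp hω β
    have hγ : 0 < Pγ (g (β ω)) := law_pos hp hω (g ∘ β)
    rw [log_div (mul_pos hα hβ).ne' hγ.ne', log_mul hα.ne' hβ.ne']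
    ring
  simp only [hsplit, Finset.sum_sub_distrib, Finset.sum_add_distrib] at hgibbs
  rw [entropy_eq_neg_sum_log p (fun ω => (α ω, g (β ω))), entropy_eq_neg_sum_log p β,
    entropy_eq_neg_sum_log p (g ∘ β)]
  simp only [Function.comp_apply]
  linarith

/-- `H((W i)_i | Ψ) ≤ ∑ i, H(W i | Ψ)`. -/
lemma entropy_pi_pair_sub_le {ι Y Z : Type*} [Fintype ι] [DecidableEq ι] [Fintype Y]
    [DecidableEq Y] [Fintype Z] [DecidableEq Z] (hp : ∀ ω, 0 ≤ p ω) (hp1 : ∑ ω, p ω = 1)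
    (W : ι → Ω → Y) (Ψ : Ω → Z) :
    entropy p (fun ω => ((fun i => W i ω), Ψ ω)) - entropy p Ψ
      ≤ ∑ i, (entropy p (fun ω => (W i ω, Ψ ω)) - entropy p Ψ) := by
  have hfinset : ∀ s : Finset ι, entropy p (fun ω => ((fun i : s => W i ω), Ψ ω)) - entropy p Ψ
      ≤ ∑ i ∈ s, (entropy p (fun ω => (W i ω, Ψ ω)) - entropy p Ψ) := by
    intro s
    induction s using Finset.induction_on with
    | empty =>
      rw [Finset.sum_empty, sub_nonpos]
      refine entropy_le_of_eq_comp hp (fun z => (fun i => absurd i.2 (Finset.notMem_empty _), z))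
        fun ω => ?_
      congr 1
      ext i
      exact absurd i.2 (Finset.notMem_empty _)
    | insert a s ha ih =>
      have hinsert : entropy p (fun ω => ((fun i : ↥(insert a s) => W i ω), Ψ ω))
          ≤ entropy p (fun ω => (W a ω, ((fun i : s => W i ω), Ψ ω))) := by
        refine entropy_le_of_eq_comp hp (fun x => (fun i : ↥(insert a s) =>
          if hi : i.1 = a then x.1 else x.2.1 ⟨i.1, Finset.mem_of_mem_insert_of_ne i.2 hi⟩,
          x.2.2)) fun ω => ?_
        congr 1
        ext i
        split_ifs with hi
        · rw [hi]
        · rfl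
      have hcond := entropy_pair_add_entropy_comp_le hp hp1 (W a)
        (fun ω => ((fun i : s => W i ω), Ψ ω)) Prod.snd
      rw [Finset.sum_insert ha]
      change _ + entropy p Ψ ≤ _ at hcond
      linarith
  refine le_trans (sub_le_sub_right ?_ _) (hfinset Finset.univ)
  exact entropy_le_of_eq_comp hp (fun x => (fun i => x.1 ⟨i, Finset.mem_univ i⟩, x.2))
    fun ω => rfl

lemma entropy_sub_entropy_pi_comp_le {ι Y B : Type*} [Fintype ι] [DecidableEq ι] [Fintype Y]
    [DecidableEq Y] [Fintype B] [DecidableEq B] (hp : ∀ ω, 0 ≤ p ω) (hp1 : ∑ ω, p ω = 1)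
    (W : ι → Ω → Y) (θ : Y → B) :
    entropy p (fun ω i => W i ω) - entropy p (fun ω i => θ (W i ω))
      ≤ ∑ i, (entropy p (W i) - entropy p (fun ω => θ (W i ω))) := by
  set Ψ : Ω → ι → B := fun ω i => θ (W i ω)
  have hcond : ∀ i, entropy p (fun ω => (W i ω, Ψ ω)) - entropy p Ψ
      ≤ entropy p (W i) - entropy p (fun ω => θ (W i ω)) := by
    intro i
    have hmono := entropy_pair_add_entropy_comp_le hp hp1 (W i) Ψ (fun z => z i)
    have hgraph : entropy p (fun ω => (W i ω, θ (W i ω))) ≤ entropy p (W i) :=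
      entropy_le_of_eq_comp hp (fun y => (y, θ y)) fun _ => rfl
    change _ + entropy p (fun ω => θ (W i ω)) ≤ _ at hmono
    linarith
  have hpair : entropy p (fun ω i => W i ω) ≤ entropy p (fun ω => ((fun i => W i ω), Ψ ω)) :=
    entropy_le_of_eq_comp hp Prod.fst fun _ => rfl
  linarith [entropy_pi_pair_sub_le hp hp1 W Ψ,
    Finset.sum_le_sum fun i (_ : i ∈ Finset.univ) => hcond i]

variable {Y B : Type*} [Fintype Y] [DecidableEq Y] [Fintype B] [DecidableEq B]

noncomputable def entropyLoss (θ : Y → B) (ν : Y → ℝ) : ℝ :=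
  entropy ν id - entropy ν θ

lemma entropyLoss_law (p : Ω → ℝ) (W : Ω → Y) (θ : Y → B) :
    entropyLoss θ (law p W) = entropy p W - entropy p (fun ω => θ (W ω)) := by
  rw [entropyLoss, entropy_law, entropy_law]
  rfl

lemma entropyLoss_nonneg {ν : Y → ℝ} (hν : ∀ y, 0 ≤ ν y) (θ : Y → B) :
    0 ≤ entropyLoss θ ν :=
  sub_nonneg.mpr (entropy_comp_le hν id θ)

lemma entropyLoss_le_log_card {ν : Y → ℝ} (hν : ∀ y, 0 ≤ ν y) (hν1 : ∑ y, ν y = 1)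
    (θ : Y → B) : entropyLoss θ ν ≤ log (Fintype.card Y) := by
  rw [entropyLoss]
  linarith [entropy_le_log_card hν hν1 id, entropy_nonneg hν hν1 θ]

lemma continuous_entropyLoss (θ : Y → B) : Continuous (entropyLoss θ) := by
  unfold entropyLoss entropy law
  simp only [← Finset.sum_filter]
  fun_prop

lemma exists_pos_mul_log_card_le_and_entropyLoss_lt (θ : Y → B) (q : Y → ℝ) {ε κ : ℝ}
    (hε : 0 < ε) (hκ : 0 < κ) : ∃ δ > 0, δ * log (Fintype.card Y) ≤ κ ∧
      ∀ ν, dist ν q < 2 * δ → entropyLoss θ ν < entropyLoss θ q + ε := by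
  obtain ⟨δ₀, hδ₀, hnear⟩ :=
    Metric.continuousAt_iff.mp ((continuous_entropyLoss θ).continuousAt (x := q)) ε hε
  set L := log (Fintype.card Y)
  have hL : 0 ≤ L := log_natCast_nonneg _
  refine ⟨min (δ₀ / 2) (κ / (L + 1)), by positivity, ?_, fun ν hν => ?_⟩
  · calc min (δ₀ / 2) (κ / (L + 1)) * L ≤ κ / (L + 1) * (L + 1) := by
          gcongr
          · exact min_le_right _ _
          · linarith
      _ = κ := div_mul_cancel₀ _ (by positivity)
  · have := hnear (hν.trans_le (by linarith [min_le_left (δ₀ / 2) (κ / (L + 1))]))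
    linarith [(abs_lt.mp (Real.dist_eq _ _ ▸ this)).2]

end FiniteEntropy

open FiniteEntropy

section MeasureBridge

variable {X : Type*} [Fintype X] [MeasurableSpace X] [MeasurableSingletonClass X]

lemma law_measureReal {D : Type*} [DecidableEq D] [MeasurableSpace D]
    [MeasurableSingletonClass D] (η : Measure X) [IsFiniteMeasure η] (f : X → D) :
    law (fun x => η.real {x}) f = fun d => (η.map f).real {d} := by
  ext d
  rw [map_measureReal_apply (measurable_of_finite f) (measurableSet_singleton d), law,
    ← Finset.sum_filter, sum_measureReal_singleton]
  congr
  ext; simp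

lemma shannonEntropy_map {D : Type*} [Fintype D] [DecidableEq D] [MeasurableSpace D]
    [MeasurableSingletonClass D] (η : Measure X) [IsFiniteMeasure η] (f : X → D) :
    shannonEntropy (η.map f) = entropy (fun x => η.real {x}) f := by
  rw [shannonEntropy, entropy, ← Finset.sum_neg_distrib]
  refine Finset.sum_congr rfl fun d _ => ?_
  rw [law_measureReal, negMulLog, neg_mul]
  rfl

lemma shannonEntropy_eq_entropy [DecidableEq X] (η : Measure X) [IsFiniteMeasure η] :
    shannonEntropy η = entropy (fun x => η.real {x}) id := by
  simpa using shannonEntropy_map η id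

lemma obsEntropy_comp {Ω B : Type*} [MeasurableSpace Ω] [DecidableEq X] [Fintype B]
    [DecidableEq B] [MeasurableSpace B] [MeasurableSingletonClass B] (μ : Measure Ω)
    [IsFiniteMeasure μ] {f : Ω → X} (hf : Measurable f) (θ : X → B) :
    obsEntropy μ (θ ∘ f) = entropy (fun x => (μ.map f).real {x}) θ := by
  rw [obsEntropy, ← Measure.map_map (measurable_of_finite θ) hf, shannonEntropy_map]

end MeasureBridge

lemma dist_measureReal_lt_of_two_mul_tvDist_lt {X : Type*} [Fintype X] [MeasurableSpace X]
    (η₁ η₂ : Measure X) {r : ℝ}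
    (h : 2 * tvDist η₁ η₂ < r) : dist (fun x => η₁.real {x}) (fun x => η₂.real {x}) < r := by
  refine (dist_pi_lt_iff ((mul_nonneg zero_le_two ?_).trans_lt h)).mpr fun x => ?_
  · exact div_nonneg (Finset.sum_nonneg fun _ _ => abs_nonneg _) zero_le_two
  refine lt_of_le_of_lt ?_ h
  rw [Real.dist_eq, tvDist, mul_div_cancel₀ _ two_ne_zero]
  exact Finset.single_le_sum (f := fun x => |η₁.real {x} - η₂.real {x}|)
    (fun _ _ => abs_nonneg _) (Finset.mem_univ x)

lemma sum_le_card_mul_add_card_filter_not_mul {ι : Type*} (s : Finset ι) (f : ι → ℝ)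
    (P : ι → Prop) [DecidablePred P] {a b : ℝ} (ha : 0 ≤ a) (hgood : ∀ i ∈ s, P i → f i ≤ a)
    (hbad : ∀ i ∈ s, f i ≤ b) :
    ∑ i ∈ s, f i ≤ s.card * a + (s.filter (¬ P ·)).card * b := by
  calc ∑ i ∈ s, f i ≤ ∑ i ∈ s, (a + if P i then 0 else b) := Finset.sum_le_sum fun i hi => by
        split_ifs with h
        · simpa using hgood i hi h
        · linarith [hbad i hi]
    _ = s.card * a + (s.filter (¬ P ·)).card * b := by
        rw [Finset.sum_add_distrib, Finset.sum_ite, Finset.sum_const_zero, zero_add,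
          Finset.sum_const, Finset.sum_const, nsmul_eq_mul, nsmul_eq_mul]

lemma card_filter_not_mul_le_card_mul {V : Type*} [Fintype V] (P : V → Prop) [DecidablePred P]
    (s : Finset V) {c δ b κ : ℝ} (hP : (1 - δ) * Fintype.card V ≤ Nat.card {v // P v})
    (hs : c * Fintype.card V ≤ s.card) (hb : 0 ≤ b) (hκ : 0 ≤ κ) (hδ : δ * b ≤ c * κ) :
    (s.filter (¬ P ·)).card * b ≤ s.card * κ := by
  have hsub : ((s.filter (¬ P ·)).card : ℝ) ≤ (Finset.univ.filter (¬ P ·)).card := by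
    exact_mod_cast Finset.card_le_card (Finset.filter_subset_filter _ (Finset.subset_univ s))
  have hsplit : ((Finset.univ.filter P).card : ℝ) + (Finset.univ.filter (¬ P ·)).card
      = Fintype.card V := by
    exact_mod_cast Finset.card_filter_add_card_filter_not (s := Finset.univ) P
  rw [Nat.card_eq_fintype_card, Fintype.card_subtype] at hP
  have hV : (0 : ℝ) ≤ Fintype.card V := Nat.cast_nonneg _
  calc _ ≤ δ * Fintype.card V * b := mul_le_mul_of_nonneg_right (by linarith) hb
    _ ≤ c * Fintype.card V * κ := by nlinarith
    _ ≤ s.card * κ := mul_le_mul_of_nonneg_right hs hκ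

lemma exists_restrict_image_eq_comp {G V A : Type*} [DecidableEq V] (F : Finset G)
    (S : Finset V) (σ : G → Equiv.Perm V) :
    ∃ f : (↥S → ↥F → A) → ↥((F ×ˢ S).image fun p => σ p.1 p.2) → A,
      ∀ x : V → A, (fun w => x w.1) = f (fun v g => x (σ g.1 v.1)) := by
  have hpre : ∀ w : ↥((F ×ˢ S).image fun p => σ p.1 p.2),
      ∃ p : ↥F × ↥S, σ p.1.1 p.2.1 = w.1 := by
    intro w
    obtain ⟨⟨g, v⟩, hgv, hw⟩ := Finset.mem_image.mp w.2
    obtain ⟨hg, hv⟩ := Finset.mem_product.mp hgv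
    exact ⟨(⟨g, hg⟩, ⟨v, hv⟩), hw⟩
  choose pre hpre using hpre
  exact ⟨fun y w => y (pre w).2 (pre w).1, fun x => funext fun w => by simp only [← hpre w]⟩

section Sofic

variable {G V A B : Type*} [DecidableEq G] [Fintype V] [DecidableEq V] [Fintype A]
  [DecidableEq A] [Fintype B] [DecidableEq B] {p : (V → A) → ℝ}

lemma entropy_restrict_image_sub_le_sum (hp : ∀ x, 0 ≤ p x) (hp1 : ∑ x, p x = 1)
    (F : Finset G) (S : Finset V) (σ : G → Equiv.Perm V) (θ : (↥F → A) → B) :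
    entropy p (fun (x : V → A) (w : ↥((F ×ˢ S).image fun p => σ p.1 p.2)) => x w.1)
        - entropy p (fun x (v : ↥S) => θ fun g : ↥F => x (σ g.1 v.1))
      ≤ ∑ v ∈ S, entropyLoss θ (law p fun x (g : ↥F) => x (σ g.1 v)) := by
  obtain ⟨f, hf⟩ := exists_restrict_image_eq_comp (A := A) F S σ
  have hwindows := entropy_le_of_eq_comp hp f hf
  simp only [entropyLoss_law]
  rw [← Finset.sum_coe_sort S]
  linarith [entropy_sub_entropy_pi_comp_le hp hp1 (fun (v : ↥S) x (g : ↥F) => x (σ g.1 v.1)) θ]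

lemma entropy_restrict_image_sub_le_card_mul (hp : ∀ x, 0 ≤ p x) (hp1 : ∑ x, p x = 1)
    (F : Finset G) (S : Finset V) (σ : G → Equiv.Perm V) (θ : (↥F → A) → B)
    (P : V → Prop) [DecidablePred P] {a b : ℝ} (ha : 0 ≤ a)
    (hgood : ∀ v ∈ S, P v → entropyLoss θ (law p fun x (g : ↥F) => x (σ g.1 v)) ≤ a)
    (hbad : (S.filter (¬ P ·)).card * log (Fintype.card (↥F → A)) ≤ S.card * b) :
    entropy p (fun (x : V → A) (w : ↥((F ×ˢ S).image fun p => σ p.1 p.2)) => x w.1)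
        - entropy p (fun x (v : ↥S) => θ fun g : ↥F => x (σ g.1 v.1))
      ≤ S.card * (a + b) := by
  have hsum := sum_le_card_mul_add_card_filter_not_mul S _ P ha hgood fun v _ =>
    entropyLoss_le_log_card (law_nonneg hp _) (by rw [sum_law, hp1]) θ
  linarith [entropy_restrict_image_sub_le_sum hp hp1 F S σ θ]

end Sofic

theorem stmt6_general {G : Type*} [Group G] [DecidableEq G]
    (V : ℕ → Type*) [∀ n, Fintype (V n)] [∀ n, DecidableEq (V n)]
    (σ : ∀ n, G → Equiv.Perm (V n))
    (A B : Type*) [Fintype A] [MeasurableSpace A] [DiscreteMeasurableSpace A]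
    [Fintype B] [MeasurableSpace B] [DiscreteMeasurableSpace B]
    (μ : Measure (G → A)) [IsProbabilityMeasure μ]
    (μn : ∀ n, Measure (V n → A)) (hμn : ∀ n, IsProbabilityMeasure (μn n))
    (hconv : LocalWeakStarConverges σ μn μ)
    (F : Finset G) (θ : (↥F → A) → B)
    -- `φ = θ ∘ π_F` is the corresponding `F`-local observable; below it appears
    -- directly as `fun a => θ (fun g : ↥F => a g.1)`.
    (c : ℝ) (hc : 0 < c)
    (S : ∀ n, Finset (V n)) (hS : ∀ n, c * (Fintype.card (V n) : ℝ) ≤ ((S n).card : ℝ)) :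
    ∀ ε : ℝ, 0 < ε → ∀ᶠ n in atTop,
      shannonEntropy (Measure.map (fun (a : G → A) (g : ↥F) => a g.1) μ) -
          (1 / ((S n).card : ℝ)) *
            shannonEntropy (Measure.map
              (fun (x : V n → A) (w : ↥((F ×ˢ S n).image (fun p => σ n p.1 p.2))) => x w.1)
              (μn n)) ≥
        obsEntropy μ (fun a => θ (fun g : ↥F => a g.1)) -
          (1 / ((S n).card : ℝ)) *
            shannonEntropy (Measure.map (fun (b : V n → B) (s : ↥(S n)) => b s.1)
              (Measure.map (fun (x : V n → A) (v : V n) => θ (fun g : ↥F => x (σ n g.1 v)))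
                (μn n))) - ε := by
  classical
  intro ε hε
  have hπF : Measurable fun (a : G → A) (g : ↥F) => a g.1 := by fun_prop
  set μF := μ.map fun (a : G → A) (g : ↥F) => a g.1
  have : IsProbabilityMeasure μF := Measure.isProbabilityMeasure_map hπF.aemeasurable
  set q : (↥F → A) → ℝ := fun y => μF.real {y}
  obtain ⟨δ, hδ, hδL, hnear⟩ :=
    exists_pos_mul_log_card_le_and_entropyLoss_lt θ q (half_pos hε) (mul_pos hc (half_pos hε))
  filter_upwards [hconv F δ hδ] with n hgood
  have := hμn n
  have hp1 : ∑ x, (μn n).real {x} = 1 := by simp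
  have hbad := card_filter_not_mul_le_card_mul _ (S n) hgood (hS n) (log_natCast_nonneg _)
    (half_pos hε).le hδL
  have hloss := entropy_restrict_image_sub_le_card_mul (fun _ => measureReal_nonneg) hp1
    F (S n) (σ n) θ _ (add_nonneg (entropyLoss_nonneg (fun _ => measureReal_nonneg) θ)
      (half_pos hε).le)
    (fun v _ hv => by
      rw [law_measureReal]
      exact (hnear _ (dist_measureReal_lt_of_two_mul_tvDist_lt _ _ (by linarith))).le) hbad
  have hΨ : Measure.map (fun (b : V n → B) (s : ↥(S n)) => b s.1)
      (Measure.map (fun (x : V n → A) (v : V n) => θ (fun g : ↥F => x (σ n g.1 v))) (μn n))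
      = (μn n).map fun x (v : ↥(S n)) => θ fun g : ↥F => x (σ n g.1 v.1) :=
    Measure.map_map (measurable_of_finite _) (measurable_of_finite _)
  rw [ge_iff_le, hΨ, shannonEntropy_eq_entropy μF, shannonEntropy_map (μn n),
    shannonEntropy_map (μn n),
    show (fun a : G → A => θ fun g : ↥F => a g.1) = θ ∘ _ from rfl, obsEntropy_comp μ hπF]
  have := div_le_of_le_mul₀ (Nat.cast_nonneg _)
    (add_nonneg (entropyLoss_nonneg (fun _ => measureReal_nonneg) θ) hε.le)
    ((hloss.trans_eq (by ring)) : _ ≤ (entropyLoss θ q + ε) * (S n).card)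
  rw [entropyLoss, ← one_div_mul_eq_div] at this
  linarith

theorem stmt6 {G : Type*} [Group G] [Countable G] [DecidableEq G]
    (V : ℕ → Type*) [∀ n, Fintype (V n)] [∀ n, DecidableEq (V n)]
    (σ : ∀ n, G → Equiv.Perm (V n)) (hσ : IsSoficApprox σ)
    (A B : Type*) [Fintype A] [MeasurableSpace A] [DiscreteMeasurableSpace A]
    [Fintype B] [MeasurableSpace B] [DiscreteMeasurableSpace B]
    (μ : Measure (G → A)) [IsProbabilityMeasure μ]
    (hinv : ∀ g : G, Measure.map (fun (a : G → A) (k : G) => a (k * g)) μ = μ)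
    (μn : ∀ n, Measure (V n → A)) (hμn : ∀ n, IsProbabilityMeasure (μn n))
    (hconv : LocalWeakStarConverges σ μn μ)
    (F : Finset G) (θ : (↥F → A) → B)
    -- `φ = θ ∘ π_F` is the corresponding `F`-local observable; below it appears
    -- directly as `fun a => θ (fun g : ↥F => a g.1)`.
    (c : ℝ) (hc : 0 < c)
    (S : ∀ n, Finset (V n)) (hS : ∀ n, c * (Fintype.card (V n) : ℝ) ≤ ((S n).card : ℝ)) :
    ∀ ε : ℝ, 0 < ε → ∀ᶠ n in atTop,
      shannonEntropy (Measure.map (fun (a : G → A) (g : ↥F) => a g.1) μ) -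
          (1 / ((S n).card : ℝ)) *
            shannonEntropy (Measure.map
              (fun (x : V n → A) (w : ↥((F ×ˢ S n).image (fun p => σ n p.1 p.2))) => x w.1)
              (μn n)) ≥
        obsEntropy μ (fun a => θ (fun g : ↥F => a g.1)) -
          (1 / ((S n).card : ℝ)) *
            shannonEntropy (Measure.map (fun (b : V n → B) (s : ↥(S n)) => b s.1)
              (Measure.map (fun (x : V n → A) (v : V n) => θ (fun g : ↥F => x (σ n g.1 v)))
                (μn n))) - ε :=
  stmt6_general V σ A B μ μn hμn hconv F θ c hc S hS
end

section
/- Let G be a countable discrete group, let Σ = (σ_n : G → Sym(V_n)) be a sofic approximation to G, let A be a finite set, and let η be a probability measure on A. Let μ = η^G be the product (Bernoulli) measure on A^G and let μ_n = η^{V_n} be the product measure on A^{V_n}. Then the sequence (μ_n)_{n=1}^∞ locally weak* converges to μ over Σ. -/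
open MeasureTheory Filter

/-!
At a vertex `v` where the points `σ_n(g) v`, `g ∈ F`, are pairwise distinct, the pattern
`g ↦ ā(σ_n(g) v)` reads off distinct coordinates of a sample of `η^{V_n}`, so its law is
exactly `η^F = μ_F`. A collision `σ_n(g) v = σ_n(h) v` with `g ≠ h` forces `σ_n(h⁻¹g)` to fix
`v` unless `σ_n` fails to be multiplicative at `v`, and both happen only on a vanishing
proportion of vertices by soficity; summing over the finitely many pairs in `F` concludes.
-/

namespace MeasureTheory.Measure

theorem map_pi_comp_of_injective {ι κ A : Type*} [Fintype ι] [Fintype κ] [MeasurableSpace A]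
    (η : Measure A) [IsProbabilityMeasure η] {f : ι → κ} (hf : Function.Injective f) :
    (Measure.pi fun _ : κ => η).map (fun x i => x (f i)) = Measure.pi fun _ : ι => η := by
  refine (Measure.pi_eq fun s hs => ?_).symm
  have hpre : (fun (x : κ → A) i => x (f i)) ⁻¹' Set.univ.pi s
      = Set.univ.pi fun k => {a | ∀ i, f i = k → a ∈ s i} := by
    ext x
    simp only [Set.mem_preimage, Set.mem_univ_pi, Set.mem_ofPred_eq]
    exact ⟨fun hx _ i hi => hi ▸ hx i, fun hx i => hx (f i) i rfl⟩
  rw [Measure.map_apply (measurable_pi_lambda _ fun i => measurable_pi_apply (f i))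
    (.univ_pi hs), hpre, Measure.pi_pi]
  refine (Fintype.prod_of_injective f hf (fun i => η (s i)) _ (fun k hk => ?_) (fun i => ?_)).symm
  · have : {a | ∀ i, f i = k → a ∈ s i} = Set.univ :=
      Set.eq_univ_of_forall fun a i hi => absurd ⟨i, hi⟩ hk
    rw [this, measure_univ]
  · congr 1
    ext a
    exact ⟨fun ha i' hi' => hf hi' ▸ ha, fun ha => ha i rfl⟩

end MeasureTheory.Measure

section Density

variable {V : Type*} [Fintype V]

/-- With Lean's `x / 0 = 0` the density over an empty type is `0`, hence the `Nonempty`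
assumptions below. -/
noncomputable def density (p : V → Prop) : ℝ :=
  Nat.card {v // p v} / Fintype.card V

theorem density_nonneg (p : V → Prop) : 0 ≤ density p := by
  unfold density
  positivity

theorem density_mono {p q : V → Prop} (h : ∀ v, p v → q v) : density p ≤ density q := by
  classical
  unfold density
  gcongr
  simp only [Nat.card_eq_fintype_card]
  exact Fintype.card_subtype_mono p q h

theorem density_or_le (p q : V → Prop) :
    density (fun v => p v ∨ q v) ≤ density p + density q := by
  classical
  simp only [density, ← add_div, Nat.card_eq_fintype_card]
  gcongr
  exact_mod_cast Fintype.card_subtype_or p q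

theorem density_exists_finset_le {ι : Type*} (s : Finset ι) (p : ι → V → Prop) :
    density (fun v => ∃ i ∈ s, p i v) ≤ ∑ i ∈ s, density (p i) := by
  classical
  induction s using Finset.induction_on with
  | empty => simp [density]
  | insert i s hi ih =>
    rw [Finset.sum_insert hi]
    calc density (fun v => ∃ j ∈ insert i s, p j v)
        ≤ density (fun v => p i v ∨ ∃ j ∈ s, p j v) :=
          density_mono fun v => by simp only [Finset.mem_insert, exists_eq_or_imp, imp_self]
      _ ≤ _ := (density_or_le _ _).trans (by gcongr)

variable [Nonempty V]

theorem density_not (p : V → Prop) : density (fun v => ¬ p v) = 1 - density p := by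
  classical
  have hV : (0 : ℝ) < Fintype.card V := by exact_mod_cast Fintype.card_pos
  simp only [density, Nat.card_eq_fintype_card, Fintype.card_subtype_compl,
    Nat.cast_sub (Fintype.card_subtype_le p)]
  field_simp

theorem le_density_iff {p : V → Prop} {c : ℝ} :
    c ≤ density p ↔ c * Fintype.card V ≤ Nat.card {v // p v} :=
  le_div_iff₀ (by exact_mod_cast Fintype.card_pos)

end Density

section PermutationAction

variable {G V : Type*} [Group G] (σ : G → Equiv.Perm V)

theorem apply_inv_mul_eq_self_of_apply_eq {g h : G} {v : V} (hgh : σ g v = σ h v)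
    (hg : σ h⁻¹ (σ g v) = σ (h⁻¹ * g) v) (hh : σ h⁻¹ (σ h v) = σ (h⁻¹ * h) v)
    (h1 : σ 1 (σ 1 v) = σ (1 * 1) v) : σ (h⁻¹ * g) v = v := by
  have hone : σ 1 v = v := (σ 1).injective (by rwa [one_mul] at h1)
  rw [← hg, hgh, hh, inv_mul_cancel, hone]

theorem density_apply_eq_le [Fintype V] [Nonempty V] (g h : G) :
    density (fun v => σ g v = σ h v) ≤
      (1 - density fun v => σ h⁻¹ (σ g v) = σ (h⁻¹ * g) v) +
        (1 - density fun v => σ h⁻¹ (σ h v) = σ (h⁻¹ * h) v) +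
        (1 - density fun v => σ 1 (σ 1 v) = σ (1 * 1) v) +
        density fun v => σ (h⁻¹ * g) v = v := by
  simp only [← density_not]
  refine (density_mono fun v hgh => ?_).trans <|
    (density_or_le _ _).trans <| add_le_add_left ((density_or_le _ _).trans <|
      add_le_add_left (density_or_le _ _) _) _
  by_contra! hv
  obtain ⟨⟨⟨hg, hh⟩, h1⟩, hfix⟩ := hv
  exact hfix (apply_inv_mul_eq_self_of_apply_eq σ hgh hg hh h1)

end PermutationAction

namespace IsSoficApprox

variable {G : Type*} [Group G] {V : ℕ → Type*} [∀ n, Fintype (V n)]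
  {σ : ∀ n, G → Equiv.Perm (V n)}

theorem eventually_nonempty (hσ : IsSoficApprox σ) : ∀ᶠ n in atTop, Nonempty (V n) :=
  (hσ.1.eventually_gt_atTop 0).mono fun _ h => Fintype.card_pos_iff.mp h

theorem tendsto_density_apply_eq (hσ : IsSoficApprox σ) {g h : G} (hgh : g ≠ h) :
    Tendsto (fun n => density fun v => σ n g v = σ n h v) atTop (nhds 0) := by
  obtain ⟨-, hmul, hfix⟩ := id hσ
  have hbound := (((tendsto_const_nhds (x := (1 : ℝ))).sub (hmul h⁻¹ g)).add
    ((tendsto_const_nhds (x := (1 : ℝ))).sub (hmul h⁻¹ h))).add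
    ((tendsto_const_nhds (x := (1 : ℝ))).sub (hmul 1 1)) |>.add
    (hfix (h⁻¹ * g) (fun h1 => hgh (inv_mul_eq_one.mp h1).symm))
  simp only [sub_self, add_zero] at hbound
  refine squeeze_zero' (.of_forall fun n => density_nonneg _) ?_ hbound
  filter_upwards [hσ.eventually_nonempty] with n _
  exact density_apply_eq_le (σ n) g h

end IsSoficApprox

theorem tvDist_self {D : Type*} [Fintype D] [MeasurableSpace D] (η : Measure D) :
    tvDist η η = 0 := by
  simp [tvDist]

theorem stmt12_general {G : Type*} [Group G] [DecidableEq G]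
    (V : ℕ → Type*) [∀ n, Fintype (V n)]
    (σ : ∀ n, G → Equiv.Perm (V n)) (hσ : IsSoficApprox σ)
    (A : Type*) [Fintype A] [MeasurableSpace A]
    (η : Measure A) [IsProbabilityMeasure η]
    -- `μ` is the Bernoulli (product) measure `η^G` on `A^G`, characterized by its
    -- finite-dimensional marginals:
    (μ : Measure (G → A))
    (hμ : ∀ F : Finset G,
      Measure.map (fun (a : G → A) (g : ↥F) => a g.1) μ = Measure.pi fun _ : ↥F => η) :
    LocalWeakStarConverges σ (fun n => Measure.pi fun _ : V n => η) μ := by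
  intro F δ hδ
  have hcollide := tendsto_finsetSum F.offDiag fun p hp =>
    hσ.tendsto_density_apply_eq (Finset.mem_offDiag.mp hp).2.2
  rw [Finset.sum_const_zero] at hcollide
  filter_upwards [hcollide.eventually (gt_mem_nhds hδ), hσ.eventually_nonempty] with n hsmall _
  rw [← le_density_iff]
  calc 1 - δ ≤ 1 - density fun v => ∃ p ∈ F.offDiag, σ n p.1 v = σ n p.2 v := by
        linarith [density_exists_finset_le F.offDiag fun p v => σ n p.1 v = σ n p.2 v]
    _ = density fun v => ¬ ∃ p ∈ F.offDiag, σ n p.1 v = σ n p.2 v := (density_not _).symm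
    _ ≤ _ := density_mono fun v hv => ?_
  have hinj : Function.Injective fun g : F => σ n g.1 v := fun g₁ g₂ h => Subtype.ext <| by
    by_contra hne
    exact hv ⟨(g₁, g₂), Finset.mem_offDiag.mpr ⟨g₁.2, g₂.2, hne⟩, h⟩
  rw [hμ, Measure.map_pi_comp_of_injective η hinj, tvDist_self]
  exact hδ

theorem stmt12 {G : Type*} [Group G] [Countable G] [DecidableEq G]
    (V : ℕ → Type*) [∀ n, Fintype (V n)]
    (σ : ∀ n, G → Equiv.Perm (V n)) (hσ : IsSoficApprox σ)
    (A : Type*) [Fintype A] [MeasurableSpace A] [DiscreteMeasurableSpace A]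
    (η : Measure A) [IsProbabilityMeasure η]
    -- `μ` is the Bernoulli (product) measure `η^G` on `A^G`, characterized by its
    -- finite-dimensional marginals:
    (μ : Measure (G → A)) [IsProbabilityMeasure μ]
    (hμ : ∀ F : Finset G,
      Measure.map (fun (a : G → A) (g : ↥F) => a g.1) μ = Measure.pi fun _ : ↥F => η) :
    LocalWeakStarConverges σ (fun n => Measure.pi fun _ : V n => η) μ :=
  stmt12_general V σ hσ A η μ hμ
end

section
/- Let G be a countable group, H ≤ G a subgroup, and T ⊆ G a transversal for the right cosets of H, so that every g ∈ G has a unique decomposition g = h(g)·t(g) with h(g) ∈ H and t(g) ∈ T. Let A be a measurable space and let ν be a probability measure on A^H that is invariant under the right-shift action of H on A^H (given by (h·x)(k) = x(kh)). Define Φ : (A^H)^T → A^G by Φ(x)(g) = x_{t(g)}(h(g)), and let CInd^G_H(ν) = Φ_*(ν^T), where ν^T is the product of copies of ν indexed by T. Then CInd^G_H(ν) is invariant under the right-shift action of G on A^G (given by (g·a)(k) = a(kg)). -/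
open MeasureTheory

/-- The coinduction map `Φ : (A^H)^T → A^G`, sending `x` to the function
`g ↦ x_{t(g)}(h(g))`, where `g = h(g)·t(g)` is the coset decomposition. -/
def coindMap {G : Type*} [Group G] (H : Subgroup G) (T : Set G) (A : Type*)
    (hpart : G → H) (tpart : G → T) (x : T → H → A) : G → A :=
  fun g => x (tpart g) (hpart g)

theorem stmt13 {G : Type*} [Group G] [Countable G]
    (H : Subgroup G) (T : Set G)
    -- `T` is a transversal for the right cosets of `H`: every `g ∈ G` decomposes
    -- uniquely as `g = h·t` with `h ∈ H`, `t ∈ T`; `hpart` and `tpart` give this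
    -- decomposition.
    (htrans : ∀ g : G, ∃! p : H × T, (p.1 : G) * (p.2 : G) = g)
    (hpart : G → H) (tpart : G → T)
    (hdecomp : ∀ g : G, (hpart g : G) * (tpart g : G) = g)
    (A : Type*) [MeasurableSpace A]
    -- `ν` is an `H`-invariant probability measure on `A^H` (right-shift action)
    (ν : Measure (H → A)) [IsProbabilityMeasure ν]
    (hν : ∀ h₀ : H, Measure.map (fun (x : H → A) (k : H) => x (k * h₀)) ν = ν)
    -- `νT` is the product measure `ν^T` on `(A^H)^T`, characterized by its
    -- finite-dimensional marginals:
    (νT : Measure (T → H → A)) [IsProbabilityMeasure νT]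
    (hνT : ∀ J : Finset T,
      Measure.map (fun (x : T → H → A) (t : ↥J) => x t.1) νT = Measure.pi fun _ : ↥J => ν) :
    -- the coinduced measure `CInd^G_H(ν) = Φ_*(ν^T)` is invariant under the
    -- right-shift action of `G` on `A^G`:
    ∀ g₀ : G,
      Measure.map (fun (a : G → A) (k : G) => a (k * g₀))
          (Measure.map (coindMap H T A hpart tpart) νT) =
        Measure.map (coindMap H T A hpart tpart) νT := by
  classical
  intro g₀
  -- uniqueness of the decomposition
  have huniq : ∀ (g : G) (h : H) (t : T), (h : G) * (t : G) = g →
      hpart g = h ∧ tpart g = t := by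
    intro g h t hg
    obtain ⟨p, -, hp⟩ := htrans g
    have e1 : ((h, t) : H × T) = p := hp (h, t) hg
    have e2 : ((hpart g, tpart g) : H × T) = p := hp _ (hdecomp g)
    have e3 := e2.trans e1.symm
    exact ⟨congrArg Prod.fst e3, congrArg Prod.snd e3⟩
  have hσaux : ∀ (g₁ : G) (t : T), tpart ((tpart ((t : G) * g₁) : G) * g₁⁻¹) = t := by
    intro g₁ t
    refine (huniq _ ((hpart ((t : G) * g₁))⁻¹) t ?_).2
    have h1 : (tpart ((t : G) * g₁) : G) =
        ((hpart ((t : G) * g₁) : G))⁻¹ * ((t : G) * g₁) := by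
      rw [eq_inv_mul_iff_mul_eq]; exact hdecomp _
    push_cast
    rw [h1]; group
  -- the induced permutation of the transversal
  let σ : T ≃ T :=
    { toFun := fun t => tpart ((t : G) * g₀)
      invFun := fun t => tpart ((t : G) * g₀⁻¹)
      left_inv := fun t => hσaux g₀ t
      right_inv := fun t => by simpa using hσaux g₀⁻¹ t }
  -- decomposition of `g * g₀`
  have hkey : ∀ g : G, hpart (g * g₀) = hpart g * hpart ((tpart g : G) * g₀)
      ∧ tpart (g * g₀) = tpart ((tpart g : G) * g₀) := by
    intro g
    refine huniq _ _ _ ?_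
    push_cast
    rw [mul_assoc, hdecomp ((tpart g : G) * g₀), ← mul_assoc, hdecomp g]
  -- the corresponding transformation of `(A^H)^T`
  set Ψ : (T → H → A) → (T → H → A) :=
    fun x t k => x (σ t) (k * hpart ((t : G) * g₀)) with hΨdef
  have measΦ : Measurable (coindMap H T A hpart tpart) :=
    measurable_pi_lambda _ fun g =>
      (measurable_pi_apply (hpart g)).comp (measurable_pi_apply (tpart g))
  have measS : Measurable (fun (a : G → A) (k : G) => a (k * g₀)) :=
    measurable_pi_lambda _ fun k => measurable_pi_apply _
  have measΨ : Measurable Ψ :=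
    measurable_pi_lambda _ fun t => measurable_pi_lambda _ fun k =>
      (measurable_pi_apply _).comp (measurable_pi_apply _)
  have measshift : ∀ h₀ : H, Measurable (fun (x : H → A) (k : H) => x (k * h₀)) :=
    fun h₀ => measurable_pi_lambda _ fun k => measurable_pi_apply _
  have hνinv : ∀ (h₀ : H) (u : Set (H → A)), MeasurableSet u →
      ν ((fun (x : H → A) (k : H) => x (k * h₀)) ⁻¹' u) = ν u := by
    intro h₀ u hu
    conv_rhs => rw [← hν h₀]
    rw [Measure.map_apply (measshift h₀) hu]
  -- the shift intertwines `Φ` and `Ψ`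
  have hcomp : (fun (a : G → A) (k : G) => a (k * g₀)) ∘ coindMap H T A hpart tpart
      = coindMap H T A hpart tpart ∘ Ψ := by
    funext x g
    show x (tpart (g * g₀)) (hpart (g * g₀))
      = x (σ (tpart g)) (hpart g * hpart ((tpart g : G) * g₀))
    rw [(hkey g).1, (hkey g).2]
    rfl
  -- `Ψ` preserves `νT`
  have hmain : νT.map Ψ = νT := by
    have hPM : IsProbabilityMeasure (νT.map Ψ) :=
      Measure.isProbabilityMeasure_map measΨ.aemeasurable
    refine ext_of_generate_finite _ generateFrom_measurableCylinders.symm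
      isPiSystem_measurableCylinders ?_ (by simp)
    intro s hs
    obtain ⟨J, S, hSm, rfl⟩ := (mem_measurableCylinders s).mp hs
    set J' : Finset T := J.map σ.toEmbedding with hJ'
    have memJ' : ∀ t : T, t ∈ J → σ t ∈ J' := fun t ht => by
      rw [hJ', Finset.mem_map_equiv]; simpa using ht
    set F : ({t // t ∈ J'} → H → A) → ({t // t ∈ J} → H → A) :=
      fun y t k => y ⟨σ t.1, memJ' t.1 t.2⟩ (k * hpart ((t.1 : G) * g₀)) with hF
    have measF : Measurable F :=
      measurable_pi_lambda _ fun t => measurable_pi_lambda _ fun k =>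
        (measurable_pi_apply _).comp (measurable_pi_apply _)
    have measrJ : Measurable (fun (x : T → H → A) (t : ↥J) => x t.1) :=
      measurable_pi_lambda _ fun t => measurable_pi_apply _
    have measrJ' : Measurable (fun (x : T → H → A) (t : ↥J') => x t.1) :=
      measurable_pi_lambda _ fun t => measurable_pi_apply _
    -- the reindexing equivalence
    let e : {t // t ∈ J} ≃ {t // t ∈ J'} :=
      { toFun := fun t => ⟨σ t.1, memJ' t.1 t.2⟩
        invFun := fun t' => ⟨σ.symm t'.1, Finset.mem_map_equiv.mp t'.2⟩
        left_inv := fun t => Subtype.ext (σ.symm_apply_apply t.1)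
        right_inv := fun t' => Subtype.ext (σ.apply_symm_apply t'.1) }
    -- pushforward of the finite product measure under `F`
    have hFpush : (Measure.pi fun _ : ↥J' => ν).map F = Measure.pi fun _ : ↥J => ν := by
      refine (Measure.pi_eq (μ := fun _ : {t // t ∈ J} => ν) fun u hu => ?_).symm
      rw [Measure.map_apply measF (MeasurableSet.univ_pi hu)]
      have hpre : F ⁻¹' Set.pi Set.univ u = Set.pi Set.univ
          (fun t' : ↥J' =>
            (fun (x : H → A) (k : H) => x (k * hpart (((e.symm t').1 : G) * g₀))) ⁻¹'
              u (e.symm t')) := by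
        ext y
        simp only [Set.mem_preimage, Set.mem_pi, Set.mem_univ, true_implies]
        constructor
        · intro hy t'
          have h1 := hy (e.symm t')
          simpa [F, e, Subtype.coe_eta] using h1
        · intro hy t
          have h1 := hy (e t)
          simpa [F, e, Subtype.coe_eta] using h1
      rw [hpre, Measure.pi_pi]
      have hν' : ∀ t' : ↥J',
          ν ((fun (x : H → A) (k : H) => x (k * hpart (((e.symm t').1 : G) * g₀))) ⁻¹'
              u (e.symm t')) = ν (u (e.symm t')) :=
        fun t' => hνinv _ _ (hu _)
      calc ∏ t' : ↥J', ν ((fun (x : H → A) (k : H) =>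
              x (k * hpart (((e.symm t').1 : G) * g₀))) ⁻¹' u (e.symm t'))
          = ∏ t' : ↥J', ν (u (e.symm t')) := Finset.prod_congr rfl fun t' _ => hν' t'
        _ = ∏ t : ↥J, ν (u t) := Equiv.prod_comp e.symm fun t => ν (u t)
    have hset : Ψ ⁻¹' (cylinder J S) = (fun (x : T → H → A) (t : ↥J') => x t.1) ⁻¹' (F ⁻¹' S) := by
      rfl
    calc (νT.map Ψ) (cylinder J S)
        = νT (Ψ ⁻¹' cylinder J S) := Measure.map_apply measΨ (hSm.cylinder _)
      _ = νT ((fun (x : T → H → A) (t : ↥J') => x t.1) ⁻¹' (F ⁻¹' S)) := by rw [hset]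
      _ = (νT.map (fun (x : T → H → A) (t : ↥J') => x t.1)) (F ⁻¹' S) :=
          (Measure.map_apply measrJ' (measF hSm)).symm
      _ = (Measure.pi fun _ : ↥J' => ν) (F ⁻¹' S) := by rw [hνT J']
      _ = ((Measure.pi fun _ : ↥J' => ν).map F) S := (Measure.map_apply measF hSm).symm
      _ = (Measure.pi fun _ : ↥J => ν) S := by rw [hFpush]
      _ = (νT.map (fun (x : T → H → A) (t : ↥J) => x t.1)) S := by rw [hνT J]
      _ = νT (cylinder J S) := Measure.map_apply measrJ hSm
  calc Measure.map (fun (a : G → A) (k : G) => a (k * g₀))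
        (Measure.map (coindMap H T A hpart tpart) νT)
      = Measure.map ((fun (a : G → A) (k : G) => a (k * g₀)) ∘ coindMap H T A hpart tpart) νT :=
        Measure.map_map measS measΦ
    _ = Measure.map (coindMap H T A hpart tpart ∘ Ψ) νT := by rw [hcomp]
    _ = Measure.map (coindMap H T A hpart tpart) (Measure.map Ψ νT) :=
        (Measure.map_map measΦ measΨ).symm
    _ = Measure.map (coindMap H T A hpart tpart) νT := by rw [hmain]
end
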